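/- arXiv:2002.08681 — 2 statements merged into one kernel-verified Lean document; each statement's English description precedes it below -/
import Mathlib

section
/- Fix ρ > 0 and K ≥ 2. For scoring vectors u, v ∈ ℝ^K with ∑_k u_k = 0 and ∑_k v_k = 0, and for any label y ∈ {1,…,K}, the following pointwise inequality holds: (1/K)·‖M^ρ(u) − M^ρ(v)‖_1 ≤ L^ρ(u, y) + L^ρ(v, y), where M^ρ(w) ∈ [0,1]^{K×K} is the matrix with entries M^ρ_{i,j}(w) = Φ_ρ(μ_i(w, j)), ‖·‖_1 is the entrywise L1 norm, and L^ρ(w, y) = ∑_{k=1}^K Φ_ρ(μ_k(w, y)). -/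
open MeasureTheory Finset

/-- The ramp loss with margin `ρ`. -/
noncomputable def ramp (ρ x : ℝ) : ℝ :=
  if ρ ≤ x then 0 else if x ≤ 0 then 1 else 1 - x / ρ

/-- The absolute margin function: `margin w y k = w k` if `k = y`, else `-w k`. -/
def margin {K : ℕ} (w : Fin K → ℝ) (y k : Fin K) : ℝ :=
  if k = y then w k else -w k

/-- Entrywise L1 distance between the matrices of absolute margin violations
`M^ρ(u)` and `M^ρ(v)`, where `M^ρ_{i,j}(w) = Φ_ρ(μ_i(w,j))`. -/
noncomputable def l1diff (ρ : ℝ) {K : ℕ} (u v : Fin K → ℝ) : ℝ :=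
  ∑ i : Fin K, ∑ j : Fin K, |ramp ρ (margin u j i) - ramp ρ (margin v j i)|

/-- The margin-based multi-class loss `L^ρ(w, y) = ∑_k Φ_ρ(μ_k(w,y))`. -/
noncomputable def Lmargin (ρ : ℝ) {K : ℕ} (w : Fin K → ℝ) (y : Fin K) : ℝ :=
  ∑ k : Fin K, ramp ρ (margin w y k)

/-!
Both `μ_i(w, j)` and `μ_i(w, y)` equal `±w_i`, with a sign pattern that is the same for `u`
and `v`. When the signs agree, `|Φ(a) - Φ(b)| ≤ Φ(a) + Φ(b)` since `Φ ≥ 0`; when they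
disagree, `Φ(-a) ≤ 1 ≤ Φ(b) + Φ(-b)` bounds `|Φ(-a) - Φ(-b)|` by `Φ(a) + Φ(b)` as well.
So each of the `K` entries of row `i` of `|M^ρ(u) - M^ρ(v)|` is at most
`Φ(μ_i(u, y)) + Φ(μ_i(v, y))`, and summing over `i` gives the claim.
-/

lemma ramp_nonneg (ρ x : ℝ) : 0 ≤ ramp ρ x := by
  unfold ramp
  split_ifs with hρx hx
  · exact le_rfl
  · exact zero_le_one
  · rw [sub_nonneg, div_le_one (by linarith)]
    linarith

lemma ramp_le_one (ρ x : ℝ) : ramp ρ x ≤ 1 := by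
  unfold ramp
  split_ifs with hρx hx
  · exact zero_le_one
  · exact le_rfl
  · exact sub_le_self 1 (div_pos (by linarith) (by linarith)).le

lemma ramp_of_nonpos {ρ x : ℝ} (hρ : 0 < ρ) (hx : x ≤ 0) : ramp ρ x = 1 := by
  rw [ramp, if_neg (by linarith), if_pos hx]

lemma one_le_ramp_add_ramp_neg {ρ : ℝ} (hρ : 0 < ρ) (x : ℝ) : 1 ≤ ramp ρ x + ramp ρ (-x) := by
  rcases le_total x 0 with hx | hx
  · rw [ramp_of_nonpos hρ hx]
    linarith [ramp_nonneg ρ (-x)]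
  · rw [ramp_of_nonpos hρ (neg_nonpos.2 hx)]
    linarith [ramp_nonneg ρ x]

lemma abs_ramp_sub_ramp_le (ρ a b : ℝ) : |ramp ρ a - ramp ρ b| ≤ ramp ρ a + ramp ρ b := by
  rw [abs_sub_le_iff]
  constructor <;> linarith [ramp_nonneg ρ a, ramp_nonneg ρ b]

lemma abs_ramp_neg_sub_ramp_neg_le {ρ : ℝ} (hρ : 0 < ρ) (a b : ℝ) :
    |ramp ρ (-a) - ramp ρ (-b)| ≤ ramp ρ a + ramp ρ b := by
  rw [abs_sub_le_iff]
  constructor <;>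
    linarith [one_le_ramp_add_ramp_neg hρ a, one_le_ramp_add_ramp_neg hρ b,
      ramp_le_one ρ (-a), ramp_le_one ρ (-b), ramp_nonneg ρ a, ramp_nonneg ρ b]

lemma abs_ramp_margin_sub_le {K : ℕ} {ρ : ℝ} (hρ : 0 < ρ) (u v : Fin K → ℝ) (y j i : Fin K) :
    |ramp ρ (margin u j i) - ramp ρ (margin v j i)| ≤
      ramp ρ (margin u y i) + ramp ρ (margin v y i) := by
  unfold margin
  split_ifs
  · exact abs_ramp_sub_ramp_le ρ _ _
  · simpa using abs_ramp_neg_sub_ramp_neg_le hρ (-u i) (-v i)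
  · exact abs_ramp_neg_sub_ramp_neg_le hρ _ _
  · exact abs_ramp_sub_ramp_le ρ _ _

lemma l1diff_le_card_mul {K : ℕ} {ρ : ℝ} (hρ : 0 < ρ) (u v : Fin K → ℝ) (y : Fin K) :
    l1diff ρ u v ≤ K * (Lmargin ρ u y + Lmargin ρ v y) := by
  rw [Lmargin, Lmargin, ← sum_add_distrib, mul_sum]
  refine sum_le_sum fun i _ => ?_
  simpa only [card_univ, Fintype.card_fin, nsmul_eq_mul] using
    sum_le_card_nsmul univ _ _ fun j _ => abs_ramp_margin_sub_le hρ u v y j i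

lemma Lmargin_nonneg {K : ℕ} (ρ : ℝ) (w : Fin K → ℝ) (y : Fin K) : 0 ≤ Lmargin ρ w y :=
  sum_nonneg fun k _ => ramp_nonneg ρ (margin w y k)

theorem mcsd_pointwise_le_losses_general {K : ℕ} (ρ : ℝ) (hρ : 0 < ρ)
    (u v : Fin K → ℝ)
    (y : Fin K) :
    (1 / (K : ℝ)) * l1diff ρ u v ≤ Lmargin ρ u y + Lmargin ρ v y := by
  rw [one_div_mul_eq_div]
  refine div_le_of_le_mul₀ K.cast_nonneg
    (add_nonneg (Lmargin_nonneg ρ u y) (Lmargin_nonneg ρ v y)) ?_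
  rw [mul_comm]
  exact l1diff_le_card_mul hρ u v y

theorem mcsd_pointwise_le_losses {K : ℕ} (hK : 2 ≤ K) (ρ : ℝ) (hρ : 0 < ρ)
    (u v : Fin K → ℝ) (hu : ∑ k : Fin K, u k = 0) (hv : ∑ k : Fin K, v k = 0)
    (y : Fin K) :
    (1 / (K : ℝ)) * l1diff ρ u v ≤ Lmargin ρ u y + Lmargin ρ v y :=
  mcsd_pointwise_le_losses_general ρ hρ u v y
end

section
/- (Proposition 4, key computation) Fix K ≥ 2 and M > 0. Among all vectors w ∈ ℝ^K with ∑_k w_k = 0 and ‖w‖_∞ ≤ M, the softmax probability of coordinate y, softmax_y(w) = exp(w_y)/∑_k exp(w_k), is maximized uniquely at the vector with w_y = M and w_k = −M/(K−1) for all k ≠ y. Moreover, at this maximizer, for any 0 < ρ ≤ M/(K−1) one has ∑_{k=1}^K Φ_ρ(μ_k(w, y)) = 0. -/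
open MeasureTheory Finset

/-!
Since `softmax_y(w)⁻¹ = 1 + ∑_{k ≠ y} exp (w_k - w_y)` and `∑ w = 0`, the `K - 1` exponents
`w_k - w_y` sum to `-K w_y ≥ -K M`. By Jensen's inequality for `exp`, such a sum of exponentials
is at least `(K - 1) exp (-K M / (K - 1))`, and strict convexity forces equality only when every
exponent equals `-K M / (K - 1)`, which together with `w_y = M` pins down the peaked vector.
Its margins are `M` and `M / (K - 1)`, both at least `ρ`, so the ramp loss vanishes.
-/

namespace Real

variable {ι : Type*} {s : Finset ι} {p : ι → ℝ}

lemma sum_inv_card_eq_one (hs : s.Nonempty) : ∑ _i ∈ s, (#s : ℝ)⁻¹ = 1 := by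
  rw [sum_const, nsmul_eq_mul, mul_inv_cancel₀ (by positivity)]

lemma exp_mean_le_mean_exp (hs : s.Nonempty) :
    exp ((∑ i ∈ s, p i) / #s) ≤ (∑ i ∈ s, exp (p i)) / #s := by
  simpa only [smul_eq_mul, inv_mul_eq_div, ← sum_div] using
    convexOn_exp.map_sum_le (fun _ _ => by positivity) (sum_inv_card_eq_one hs)
      (fun i _ => Set.mem_univ (p i))

lemma eq_mean_of_mean_exp_le_exp_mean (hs : s.Nonempty)
    (h : (∑ i ∈ s, exp (p i)) / #s ≤ exp ((∑ i ∈ s, p i) / #s)) :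
    ∀ i ∈ s, p i = (∑ j ∈ s, p j) / #s := by
  have := (strictConvexOn_exp.map_sum_eq_iff (fun _ _ => by positivity) (sum_inv_card_eq_one hs)
    (fun i _ => Set.mem_univ (p i))).1
  simp only [smul_eq_mul, inv_mul_eq_div, ← sum_div] at this
  exact this (le_antisymm (exp_mean_le_mean_exp hs) h)

lemma card_mul_exp_le_sum_exp (hs : s.Nonempty) {c : ℝ} (hc : c ≤ ∑ i ∈ s, p i) :
    #s * exp (c / #s) ≤ ∑ i ∈ s, exp (p i) := by
  have hs' : (0 : ℝ) < #s := by simpa using hs.card_pos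
  rw [← le_div_iff₀' hs']
  calc exp (c / #s) ≤ exp ((∑ i ∈ s, p i) / #s) := by gcongr
    _ ≤ (∑ i ∈ s, exp (p i)) / #s := exp_mean_le_mean_exp hs

lemma eq_div_card_of_sum_exp_le (hs : s.Nonempty) {c : ℝ} (hc : c ≤ ∑ i ∈ s, p i)
    (h : ∑ i ∈ s, exp (p i) ≤ #s * exp (c / #s)) :
    ∀ i ∈ s, p i = c / #s := by
  have hs' : (0 : ℝ) < #s := by simpa using hs.card_pos
  rw [← div_le_iff₀' hs'] at h
  have hc_exp : exp (c / #s) ≤ exp ((∑ i ∈ s, p i) / #s) := by gcongr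
  have hmean : (∑ i ∈ s, p i) / #s = c / #s :=
    exp_injective (le_antisymm ((exp_mean_le_mean_exp hs).trans h) hc_exp)
  rw [← hmean]
  exact eq_mean_of_mean_exp_le_exp_mean hs (h.trans hc_exp)

end Real

section Softmax

variable {ι : Type*} [Fintype ι] [DecidableEq ι]

noncomputable def softmax (w : ι → ℝ) (y : ι) : ℝ :=
  Real.exp (w y) / ∑ k, Real.exp (w k)

lemma softmax_eq_inv (w : ι → ℝ) (y : ι) :
    softmax w y = (1 + ∑ k ∈ univ.erase y, Real.exp (w k - w y))⁻¹ := by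
  simp only [Real.exp_sub, ← sum_div]
  rw [softmax, ← inv_div, ← add_sum_erase univ _ (mem_univ y), add_div,
    div_self (Real.exp_pos _).ne']

noncomputable def peakedVector (y : ι) (M : ℝ) : ι → ℝ :=
  fun k => if k = y then M else -M / ((Fintype.card ι : ℝ) - 1)

@[simp]
lemma peakedVector_self (y : ι) (M : ℝ) : peakedVector y M y = M := if_pos rfl

lemma cast_card_erase_univ (y : ι) : (#(univ.erase y) : ℝ) = Fintype.card ι - 1 := by
  rw [cast_card_erase_of_mem (mem_univ y), card_univ]

variable [Nontrivial ι] {y : ι} {M : ℝ} {w : ι → ℝ}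

lemma nonempty_erase_univ (y : ι) : (univ.erase y).Nonempty := by
  obtain ⟨k, hk⟩ := exists_ne y
  exact ⟨k, mem_erase.2 ⟨hk, mem_univ k⟩⟩

lemma cast_card_erase_univ_pos (y : ι) : (0 : ℝ) < #(univ.erase y) := by
  simpa using (nonempty_erase_univ y).card_pos

lemma peakedVector_sub_of_ne {k : ι} (hk : k ≠ y) :
    peakedVector y M k - peakedVector y M y = -(Fintype.card ι * M) / #(univ.erase y) := by
  have hn := (cast_card_erase_univ_pos y).ne'
  have hcard : (Fintype.card ι : ℝ) = #(univ.erase y) + 1 := by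
    rw [cast_card_erase_univ]; ring
  rw [peakedVector_self, peakedVector, if_neg hk, ← cast_card_erase_univ y, hcard]
  field_simp
  ring

lemma sum_exp_sub_peakedVector :
    ∑ k ∈ univ.erase y, Real.exp (peakedVector y M k - peakedVector y M y) =
      #(univ.erase y) * Real.exp (-(Fintype.card ι * M) / #(univ.erase y)) := by
  rw [← nsmul_eq_mul, ← sum_const]
  exact sum_congr rfl fun k hk => by rw [peakedVector_sub_of_ne (ne_of_mem_erase hk)]

omit [Nontrivial ι] in
lemma sum_erase_sub_eq_neg_card_mul (hw : ∑ k, w k = 0) :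
    ∑ k ∈ univ.erase y, (w k - w y) = -(Fintype.card ι * w y) := by
  rw [sum_sub_distrib, sum_const, nsmul_eq_mul, sum_erase_eq_sub (mem_univ y), hw,
    cast_card_erase_univ]
  ring

omit [Nontrivial ι] in
lemma neg_card_mul_le_sum_erase_sub (hw : ∑ k, w k = 0) (hwy : w y ≤ M) :
    -(Fintype.card ι * M) ≤ ∑ k ∈ univ.erase y, (w k - w y) := by
  rw [sum_erase_sub_eq_neg_card_mul hw]
  gcongr

lemma card_mul_exp_le_sum_exp_sub (hw : ∑ k, w k = 0) (hwy : w y ≤ M) :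
    #(univ.erase y) * Real.exp (-(Fintype.card ι * M) / #(univ.erase y)) ≤
      ∑ k ∈ univ.erase y, Real.exp (w k - w y) :=
  Real.card_mul_exp_le_sum_exp (nonempty_erase_univ y) (neg_card_mul_le_sum_erase_sub hw hwy)

theorem softmax_le_softmax_peakedVector (hw : ∑ k, w k = 0) (hwy : w y ≤ M) :
    softmax w y ≤ softmax (peakedVector y M) y := by
  rw [softmax_eq_inv, softmax_eq_inv, sum_exp_sub_peakedVector]
  exact inv_anti₀ (by positivity) (add_le_add_right (card_mul_exp_le_sum_exp_sub hw hwy) 1)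

theorem eq_peakedVector_of_softmax_eq (hw : ∑ k, w k = 0) (hwy : w y ≤ M)
    (h : softmax w y = softmax (peakedVector y M) y) : w = peakedVector y M := by
  rw [softmax_eq_inv, softmax_eq_inv, inv_inj, add_right_inj, sum_exp_sub_peakedVector] at h
  have hgap := Real.eq_div_card_of_sum_exp_le (nonempty_erase_univ y)
    (neg_card_mul_le_sum_erase_sub hw hwy) h.le
  have hwyM : w y = M := by
    have hsum := sum_erase_sub_eq_neg_card_mul hw (y := y)
    rw [sum_congr rfl hgap, sum_const, nsmul_eq_mul,
      mul_div_cancel₀ _ (cast_card_erase_univ_pos y).ne', neg_inj] at hsum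
    exact (mul_left_cancel₀ (by positivity) hsum).symm
  funext k
  rcases eq_or_ne k y with rfl | hk
  · rw [hwyM, peakedVector_self]
  · have hk' := hgap k (mem_erase.2 ⟨hk, mem_univ k⟩)
    rw [← peakedVector_sub_of_ne hk, hwyM, peakedVector_self] at hk'
    linarith

end Softmax

lemma ramp_eq_zero_of_le {ρ x : ℝ} (h : ρ ≤ x) : ramp ρ x = 0 := if_pos h

lemma Lmargin_peakedVector_eq_zero {K : ℕ} (hK : 2 ≤ K) {M ρ : ℝ} (y : Fin K) (hρ : 0 < ρ)
    (hρM : ρ ≤ M / ((K : ℝ) - 1)) : Lmargin ρ (peakedVector y M) y = 0 := by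
  have hK' : (1 : ℝ) ≤ (K : ℝ) - 1 := by
    rw [le_sub_iff_add_le]; exact_mod_cast hK
  have hM : 0 ≤ M :=
    ((div_nonneg_iff.1 (hρ.le.trans hρM)).resolve_right fun h => by linarith [h.2]).1
  refine sum_eq_zero fun k _ => ramp_eq_zero_of_le ?_
  rcases eq_or_ne k y with rfl | hk
  · rw [margin, if_pos rfl, peakedVector_self]
    exact hρM.trans (div_le_self hM hK')
  · rw [margin, if_neg hk, peakedVector, if_neg hk, Fintype.card_fin, neg_div, neg_neg]
    exact hρM

theorem prop4_softmax_maximizer_general {K : ℕ} (hK : 2 ≤ K) (M : ℝ)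
    (y : Fin K) :
    (∀ w : Fin K → ℝ, ∑ k : Fin K, w k = 0 → (∀ k, |w k| ≤ M) →
      Real.exp (w y) / (∑ k : Fin K, Real.exp (w k)) ≤
      Real.exp ((fun k => if k = y then M else -M / ((K : ℝ) - 1)) y) /
        (∑ k : Fin K, Real.exp ((fun k => if k = y then M else -M / ((K : ℝ) - 1)) k))) ∧
    (∀ w : Fin K → ℝ, ∑ k : Fin K, w k = 0 → (∀ k, |w k| ≤ M) →
      Real.exp (w y) / (∑ k : Fin K, Real.exp (w k)) =
      Real.exp ((fun k => if k = y then M else -M / ((K : ℝ) - 1)) y) /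
        (∑ k : Fin K, Real.exp ((fun k => if k = y then M else -M / ((K : ℝ) - 1)) k)) →
      w = fun k => if k = y then M else -M / ((K : ℝ) - 1)) ∧
    (∀ ρ : ℝ, 0 < ρ → ρ ≤ M / ((K : ℝ) - 1) →
      Lmargin ρ (fun k => if k = y then M else -M / ((K : ℝ) - 1)) y = 0) := by
  have : Nontrivial (Fin K) := Fin.nontrivial_iff_two_le.2 hK
  have hv : (fun k => if k = y then M else -M / ((K : ℝ) - 1)) = peakedVector y M := by
    unfold peakedVector
    rw [Fintype.card_fin]
  rw [hv]
  exact ⟨fun w hw hb => softmax_le_softmax_peakedVector hw (abs_le.1 (hb y)).2,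
    fun w hw hb h => eq_peakedVector_of_softmax_eq hw (abs_le.1 (hb y)).2 h,
    fun ρ hρ hρM => Lmargin_peakedVector_eq_zero hK y hρ hρM⟩

theorem prop4_softmax_maximizer {K : ℕ} (hK : 2 ≤ K) (M : ℝ) (hM : 0 < M)
    (y : Fin K) :
    (∀ w : Fin K → ℝ, ∑ k : Fin K, w k = 0 → (∀ k, |w k| ≤ M) →
      Real.exp (w y) / (∑ k : Fin K, Real.exp (w k)) ≤
      Real.exp ((fun k => if k = y then M else -M / ((K : ℝ) - 1)) y) /
        (∑ k : Fin K, Real.exp ((fun k => if k = y then M else -M / ((K : ℝ) - 1)) k))) ∧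
    (∀ w : Fin K → ℝ, ∑ k : Fin K, w k = 0 → (∀ k, |w k| ≤ M) →
      Real.exp (w y) / (∑ k : Fin K, Real.exp (w k)) =
      Real.exp ((fun k => if k = y then M else -M / ((K : ℝ) - 1)) y) /
        (∑ k : Fin K, Real.exp ((fun k => if k = y then M else -M / ((K : ℝ) - 1)) k)) →
      w = fun k => if k = y then M else -M / ((K : ℝ) - 1)) ∧
    (∀ ρ : ℝ, 0 < ρ → ρ ≤ M / ((K : ℝ) - 1) →
      Lmargin ρ (fun k => if k = y then M else -M / ((K : ℝ) - 1)) y = 0) :=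
  prop4_softmax_maximizer_general hK M y
end
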